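/- Exact bias formula: for fixed candidate nuisance functions ĝ(0,·), ĝ(1,·) and m̂ with ε ≤ m̂(Z) ≤ 1−ε a.s., E[ψ(W; θ₀, ĝ, m̂)] = E[ ((m̂(Z) − m₀(Z))/m̂(Z))·(ĝ(1,Z) − g₀(1,Z)) + ((m̂(Z) − m₀(Z))/(1−m̂(Z)))·(ĝ(0,Z) − g₀(0,Z)) ], where ψ is the AIPW ATE score evaluated at θ₀ = E[g₀(1,Z) − g₀(0,Z)]. -/

import Mathlib

/-!
Using `D ∈ {0,1}`, the centred score splits pointwise as
`W(D,Z)·ζ + K(Z)·(D − m̂(Z)) + (g₁(Z) − g₀(Z) − θ₀)`, where `ζ = Y − g₀(D,Z)` is the outcome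
residual, `W = D/m̂ − (1−D)/(1−m̂)` and `K = (g₁−ĝ₁)/m̂ + (g₀−ĝ₀)/(1−m̂)`.
The first term has mean zero because `W` is `σ(D,Z)`-measurable and `E[ζ ∣ D,Z] = 0`; in the
second, conditioning on `σ(Z)` replaces `D` by `m₀(Z)`; the third has mean zero by the choice
of `θ₀`. What remains, `K(Z)·(m₀(Z) − m̂(Z))`, is the bias integrand. Overlap bounds the
weights `1/m̂` and `1/(1−m̂)` by `1/ε`, which makes every term integrable.
-/

open MeasureTheory

theorem norm_ipw_weight_le {d e ε : ℝ} (hd : d = 0 ∨ d = 1) (hε : 0 < ε)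
    (he : ε ≤ e ∧ e ≤ 1 - ε) : ‖d / e - (1 - d) / (1 - e)‖ ≤ ε⁻¹ := by
  rcases hd with rfl | rfl
  · rw [zero_div, zero_sub, sub_zero, norm_neg, norm_div, norm_one,
      Real.norm_of_nonneg (by linarith), one_div]
    exact inv_anti₀ hε (by linarith)
  · rw [sub_self, zero_div, sub_zero, norm_div, norm_one, Real.norm_of_nonneg (by linarith),
      one_div]
    exact inv_anti₀ hε he.1

theorem aipw_score_sub_eq {d y g0 g1 gh0 gh1 e θ : ℝ} (hd : d = 0 ∨ d = 1)
    (he : e ≠ 0) (he' : 1 - e ≠ 0) :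
    gh1 - gh0 + d * (y - gh1) / e - (1 - d) * (y - gh0) / (1 - e) - θ
      = (d / e - (1 - d) / (1 - e)) * (y - (d * g1 + (1 - d) * g0))
        + ((g1 - gh1) / e + (g0 - gh0) / (1 - e)) * (d - e) + (g1 - g0 - θ) := by
  rcases hd with rfl | rfl <;> field_simp <;> ring

namespace MeasureTheory

variable {Ω : Type*} {m mΩ : MeasurableSpace Ω} {μ : Measure Ω}

theorem integral_mul_eq_zero_of_condExp_eq_zero [IsFiniteMeasure μ] (hm : m ≤ mΩ)
    {f g : Ω → ℝ} (hf : StronglyMeasurable[m] f) (hfg : Integrable (f * g) μ)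
    (hg : Integrable g μ) (hg0 : μ[g | m] =ᵐ[μ] 0) :
    ∫ ω, f ω * g ω ∂μ = 0 := by
  have h : μ[f * g | m] =ᵐ[μ] 0 := by
    filter_upwards [condExp_mul_of_stronglyMeasurable_left hf hfg hg, hg0] with ω h h0
    simp [h, h0]
  change ∫ ω, (f * g) ω ∂μ = 0
  rw [← integral_condExp hm, integral_congr_ae h, integral_zero']

theorem condExp_sub_eq_zero_of_condExp_eq [IsFiniteMeasure μ] (hm : m ≤ mΩ)
    {g h : Ω → ℝ} (hg : Integrable g μ) (hh : StronglyMeasurable[m] h)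
    (hgh : μ[g | m] =ᵐ[μ] h) : μ[g - h | m] =ᵐ[μ] 0 := by
  have hhi : Integrable h μ := integrable_condExp.congr hgh
  filter_upwards [condExp_sub hg hhi m, hgh] with ω hsub hω
  simp [hsub, hω, condExp_of_stronglyMeasurable hm hh hhi]

theorem Integrable.mul_sub_of_norm_le {f a b : Ω → ℝ} {A B : ℝ} (hf : Integrable f μ)
    (ha : AEStronglyMeasurable a μ) (hb : AEStronglyMeasurable b μ)
    (haA : ∀ᵐ ω ∂μ, ‖a ω‖ ≤ A) (hbB : ∀ᵐ ω ∂μ, ‖b ω‖ ≤ B) :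
    Integrable (fun ω => f ω * (a ω - b ω)) μ := by
  refine hf.mul_bdd (c := A + B) (ha.sub hb) ?_
  filter_upwards [haA, hbB] with ω ha hb
  exact (norm_sub_le _ _).trans (add_le_add ha hb)

theorem integral_mul_sub_eq_of_condExp_eq [IsFiniteMeasure μ] (hm : m ≤ mΩ)
    {f g h c : Ω → ℝ} {C C' : ℝ} (hf : StronglyMeasurable[m] f) (hfi : Integrable f μ)
    (hg : AEStronglyMeasurable g μ) (hgC : ∀ᵐ ω ∂μ, ‖g ω‖ ≤ C)
    (hh : StronglyMeasurable[m] h) (hgh : μ[g | m] =ᵐ[μ] h)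
    (hc : AEStronglyMeasurable c μ) (hcC : ∀ᵐ ω ∂μ, ‖c ω‖ ≤ C') :
    ∫ ω, f ω * (g ω - c ω) ∂μ = ∫ ω, f ω * (h ω - c ω) ∂μ := by
  have hhC : ∀ᵐ ω ∂μ, ‖h ω‖ ≤ C := by
    filter_upwards [hgh, ae_bdd_abs_condExp_of_ae_bdd_abs (m := m) hgC] with ω hω hC
    rwa [← hω]
  have hgi : Integrable g μ := .of_bound hg C hgC
  have hfgh := hfi.mul_sub_of_norm_le hg (hh.mono hm).aestronglyMeasurable hgC hhC
  have hfhc := hfi.mul_sub_of_norm_le (hh.mono hm).aestronglyMeasurable hc hhC hcC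
  have hfgh0 : ∫ ω, f ω * (g ω - h ω) ∂μ = 0 :=
    integral_mul_eq_zero_of_condExp_eq_zero hm hf hfgh (hgi.sub (integrable_condExp.congr hgh))
      (condExp_sub_eq_zero_of_condExp_eq hm hgi hh hgh)
  calc ∫ ω, f ω * (g ω - c ω) ∂μ
      = ∫ ω, (f ω * (g ω - h ω) + f ω * (h ω - c ω)) ∂μ :=
        integral_congr_ae (ae_of_all _ fun ω => by ring)
    _ = ∫ ω, f ω * (h ω - c ω) ∂μ := by rw [integral_add hfgh hfhc, hfgh0, zero_add]

theorem Integrable.div_of_ae_le_denom {f b : Ω → ℝ} {ε : ℝ} (hf : Integrable f μ)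
    (hb : AEMeasurable b μ) (hε : 0 < ε) (hbε : ∀ᵐ ω ∂μ, ε ≤ b ω) :
    Integrable (fun ω => f ω / b ω) μ := by
  refine (hf.bdd_mul hb.inv.aestronglyMeasurable (c := ε⁻¹) ?_).congr
    (ae_of_all _ fun ω => inv_mul_eq_div _ _)
  filter_upwards [hbε] with ω hω
  rw [Pi.inv_apply, norm_inv, Real.norm_of_nonneg (hε.le.trans hω)]
  exact inv_anti₀ hε hω

section Overlap

variable {D e : Ω → ℝ} {ε : ℝ}

theorem Integrable.mul_add_one_sub_mul {f g : Ω → ℝ} (hf : Integrable f μ) (hg : Integrable g μ)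
    (hD : Measurable D) (hDbin : ∀ ω, D ω = 0 ∨ D ω = 1) :
    Integrable (fun ω => D ω * f ω + (1 - D ω) * g ω) μ :=
  (hf.bdd_mul (c := 1) (by fun_prop)
      (ae_of_all _ fun ω => by rcases hDbin ω with h | h <;> simp [h])).add
    (hg.bdd_mul (c := 1) (by fun_prop)
      (ae_of_all _ fun ω => by rcases hDbin ω with h | h <;> simp [h]))

theorem integrable_ipw_weight_mul (hD : Measurable D) (he : Measurable e)
    (hDbin : ∀ ω, D ω = 0 ∨ D ω = 1) (hε : 0 < ε) (hover : ∀ᵐ ω ∂μ, ε ≤ e ω ∧ e ω ≤ 1 - ε)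
    {f : Ω → ℝ} (hf : Integrable f μ) :
    Integrable (fun ω => (D ω / e ω - (1 - D ω) / (1 - e ω)) * f ω) μ :=
  hf.bdd_mul (by fun_prop) (hover.mono fun ω h => norm_ipw_weight_le (hDbin ω) hε h)

theorem Integrable.div_add_div_one_sub {f g : Ω → ℝ} (hf : Integrable f μ) (hg : Integrable g μ)
    (he : Measurable e) (hε : 0 < ε) (hover : ∀ᵐ ω ∂μ, ε ≤ e ω ∧ e ω ≤ 1 - ε) :
    Integrable (fun ω => f ω / e ω + g ω / (1 - e ω)) μ :=
  (hf.div_of_ae_le_denom he.aemeasurable hε (hover.mono fun _ h => h.1)).add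
    (hg.div_of_ae_le_denom (by fun_prop) hε (hover.mono fun _ h => by linarith [h.2]))

end Overlap

end MeasureTheory

theorem statement8_general {Ω 𝓩 : Type*} [MeasurableSpace Ω] [MeasurableSpace 𝓩]
    (μ : Measure Ω) [IsProbabilityMeasure μ]
    (Y D : Ω → ℝ) (Z : Ω → 𝓩) (g0 g1 ghat0 ghat1 m0 mhat : 𝓩 → ℝ) (ε : ℝ) (hε : 0 < ε)
    (hD : Measurable D) (hZ : Measurable Z)
    (hg0 : Measurable g0) (hg1 : Measurable g1) (hm0 : Measurable m0)
    (hghat0 : Measurable ghat0) (hghat1 : Measurable ghat1) (hmhat : Measurable mhat)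
    (hDbin : ∀ ω, D ω = 0 ∨ D ω = 1)
    -- `g₀(d,Z) = E[Y ∣ D = d, Z]`:
    (hζ : μ[fun ω => Y ω - (D ω * g1 (Z ω) + (1 - D ω) * g0 (Z ω)) |
        MeasurableSpace.comap (fun ω => (D ω, Z ω)) inferInstance] =ᵐ[μ] 0)
    -- `m₀(Z) = E[D ∣ Z]`:
    (hm : μ[D | MeasurableSpace.comap Z inferInstance] =ᵐ[μ] fun ω => m0 (Z ω))
    -- `m̂` bounded in `[ε, 1−ε]`:
    (hhatover : ∀ᵐ ω ∂μ, ε ≤ mhat (Z ω) ∧ mhat (Z ω) ≤ 1 - ε)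
    -- square integrability:
    (hYL2 : MemLp Y 2 μ) (hg0L2 : MemLp (fun ω => g0 (Z ω)) 2 μ)
    (hg1L2 : MemLp (fun ω => g1 (Z ω)) 2 μ)
    (hghat0L2 : MemLp (fun ω => ghat0 (Z ω)) 2 μ)
    (hghat1L2 : MemLp (fun ω => ghat1 (Z ω)) 2 μ) :
    ∫ ω, ((ghat1 (Z ω) - ghat0 (Z ω))
        + D ω * (Y ω - ghat1 (Z ω)) / mhat (Z ω)
        - (1 - D ω) * (Y ω - ghat0 (Z ω)) / (1 - mhat (Z ω))
        - (∫ ω', (g1 (Z ω') - g0 (Z ω')) ∂μ)) ∂μ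
      = ∫ ω, ((mhat (Z ω) - m0 (Z ω)) / mhat (Z ω) * (ghat1 (Z ω) - g1 (Z ω))
        + (mhat (Z ω) - m0 (Z ω)) / (1 - mhat (Z ω)) * (ghat0 (Z ω) - g0 (Z ω))) ∂μ := by
  set θ₀ := ∫ ω', (g1 (Z ω') - g0 (Z ω')) ∂μ
  set ζ : Ω → ℝ := fun ω => Y ω - (D ω * g1 (Z ω) + (1 - D ω) * g0 (Z ω))
  set W : ℝ × 𝓩 → ℝ := fun p => p.1 / mhat p.2 - (1 - p.1) / (1 - mhat p.2)
  set K : 𝓩 → ℝ := fun z => (g1 z - ghat1 z) / mhat z + (g0 z - ghat0 z) / (1 - mhat z)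
  have hi {f : Ω → ℝ} (hf : MemLp f 2 μ) : Integrable f μ := hf.integrable one_le_two
  have hDbdd : ∀ᵐ ω ∂μ, ‖D ω‖ ≤ 1 :=
    ae_of_all _ fun ω => by rcases hDbin ω with h | h <;> simp [h]
  have hmhatbdd : ∀ᵐ ω ∂μ, ‖mhat (Z ω)‖ ≤ 1 :=
    hhatover.mono fun ω h => abs_le.2 ⟨by linarith, by linarith⟩
  have hζi : Integrable ζ μ := (hi hYL2).sub ((hi hg1L2).mul_add_one_sub_mul (hi hg0L2) hD hDbin)
  have hKi : Integrable (fun ω => K (Z ω)) μ :=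
    ((hi hg1L2).sub (hi hghat1L2)).div_add_div_one_sub ((hi hg0L2).sub (hi hghat0L2))
      (hmhat.comp hZ) hε hhatover
  have hWζi : Integrable (fun ω => W (D ω, Z ω) * ζ ω) μ :=
    integrable_ipw_weight_mul hD (hmhat.comp hZ) hDbin hε hhatover hζi
  have hKDi : Integrable (fun ω => K (Z ω) * (D ω - mhat (Z ω))) μ :=
    hKi.mul_sub_of_norm_le hD.aestronglyMeasurable (hmhat.comp hZ).aestronglyMeasurable
      hDbdd hmhatbdd
  have hgi : Integrable (fun ω => g1 (Z ω) - g0 (Z ω)) μ := (hi hg1L2).sub (hi hg0L2)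
  have hWζ : ∫ ω, W (D ω, Z ω) * ζ ω ∂μ = 0 :=
    integral_mul_eq_zero_of_condExp_eq_zero (hD.prodMk hZ).comap_le
      ((by fun_prop : Measurable W).comp (comap_measurable _)).stronglyMeasurable hWζi hζi hζ
  have hKD : ∫ ω, K (Z ω) * (D ω - mhat (Z ω)) ∂μ = ∫ ω, K (Z ω) * (m0 (Z ω) - mhat (Z ω)) ∂μ :=
    integral_mul_sub_eq_of_condExp_eq hZ.comap_le
      ((by fun_prop : Measurable K).comp (comap_measurable _)).stronglyMeasurable hKi
      hD.aestronglyMeasurable hDbdd (hm0.comp (comap_measurable _)).stronglyMeasurable hm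
      (hmhat.comp hZ).aestronglyMeasurable hmhatbdd
  have hθ : ∫ ω, (g1 (Z ω) - g0 (Z ω) - θ₀) ∂μ = 0 := by
    rw [integral_sub hgi (integrable_const θ₀), integral_const, probReal_univ, one_smul, sub_self]
  calc _ = ∫ ω, (W (D ω, Z ω) * ζ ω + K (Z ω) * (D ω - mhat (Z ω))
        + (g1 (Z ω) - g0 (Z ω) - θ₀)) ∂μ := by
        refine integral_congr_ae (hhatover.mono fun ω h => ?_)
        exact aipw_score_sub_eq (hDbin ω) (by linarith) (by linarith)
    _ = ∫ ω, K (Z ω) * (m0 (Z ω) - mhat (Z ω)) ∂μ := by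
      rw [integral_add _ _, integral_add hWζi hKDi, hWζ, hKD, hθ, zero_add, add_zero]
      exacts [hWζi.add hKDi, hgi.sub (integrable_const θ₀)]
    _ = _ := integral_congr_ae (ae_of_all _ fun ω => by ring)

/-- Exact bias formula for the AIPW ATE score at fixed candidate nuisances `ĝ, m̂`:
`E[ψ(W; θ₀, ĝ, m̂)] = E[((m̂−m₀)/m̂)(ĝ(1,Z)−g₀(1,Z)) + ((m̂−m₀)/(1−m̂))(ĝ(0,Z)−g₀(0,Z))]`. -/
theorem statement8 {Ω 𝓩 : Type*} [MeasurableSpace Ω] [MeasurableSpace 𝓩]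
    (μ : Measure Ω) [IsProbabilityMeasure μ]
    (Y D : Ω → ℝ) (Z : Ω → 𝓩) (g0 g1 ghat0 ghat1 m0 mhat : 𝓩 → ℝ) (ε : ℝ) (hε : 0 < ε)
    (hY : Measurable Y) (hD : Measurable D) (hZ : Measurable Z)
    (hg0 : Measurable g0) (hg1 : Measurable g1) (hm0 : Measurable m0)
    (hghat0 : Measurable ghat0) (hghat1 : Measurable ghat1) (hmhat : Measurable mhat)
    (hDbin : ∀ ω, D ω = 0 ∨ D ω = 1)
    -- `g₀(d,Z) = E[Y ∣ D = d, Z]`: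
    (hζ : μ[fun ω => Y ω - (D ω * g1 (Z ω) + (1 - D ω) * g0 (Z ω)) |
        MeasurableSpace.comap (fun ω => (D ω, Z ω)) inferInstance] =ᵐ[μ] 0)
    -- `m₀(Z) = E[D ∣ Z]`:
    (hm : μ[D | MeasurableSpace.comap Z inferInstance] =ᵐ[μ] fun ω => m0 (Z ω))
    -- `m̂` bounded in `[ε, 1−ε]`:
    (hhatover : ∀ᵐ ω ∂μ, ε ≤ mhat (Z ω) ∧ mhat (Z ω) ≤ 1 - ε)
    -- square integrability:
    (hYL2 : MemLp Y 2 μ) (hg0L2 : MemLp (fun ω => g0 (Z ω)) 2 μ)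
    (hg1L2 : MemLp (fun ω => g1 (Z ω)) 2 μ)
    (hghat0L2 : MemLp (fun ω => ghat0 (Z ω)) 2 μ)
    (hghat1L2 : MemLp (fun ω => ghat1 (Z ω)) 2 μ) :
    ∫ ω, ((ghat1 (Z ω) - ghat0 (Z ω))
        + D ω * (Y ω - ghat1 (Z ω)) / mhat (Z ω)
        - (1 - D ω) * (Y ω - ghat0 (Z ω)) / (1 - mhat (Z ω))
        - (∫ ω', (g1 (Z ω') - g0 (Z ω')) ∂μ)) ∂μ
      = ∫ ω, ((mhat (Z ω) - m0 (Z ω)) / mhat (Z ω) * (ghat1 (Z ω) - g1 (Z ω))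
        + (mhat (Z ω) - m0 (Z ω)) / (1 - mhat (Z ω)) * (ghat0 (Z ω) - g0 (Z ω))) ∂μ :=
  statement8_general μ Y D Z g0 g1 ghat0 ghat1 m0 mhat ε hε hD hZ hg0 hg1 hm0 hghat0 hghat1 hmhat
    hDbin hζ hm hhatover hYL2 hg0L2 hg1L2 hghat0L2 hghat1L2
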